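/- arXiv:2311.05879 — 5 statements merged into one kernel-verified Lean document; each statement's English description precedes it below -/
import Mathlib

section
/- An n-exact sequence 0 → M⁰ → M¹ → ⋯ → Mⁿ⁺¹ → 0 in an additive category is split (contractible) if and only if the first morphism f⁰ : M⁰ → M¹ is a split monomorphism, if and only if the last morphism fⁿ : Mⁿ → Mⁿ⁺¹ is a split epimorphism. -/
/-!
Common framework for relative higher homological algebra (Hafezi–Asadollahi–Zhang).
We work with an additive category `C` which plays the role of the `n`-cluster
tilting subcategory `𝓜` of `mod Λ`.  `Seq C n` is the type of complexes
`M⁰ → M¹ → ⋯ → Mⁿ⁺¹` and `IsNExact` expresses `n`-exactness via the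
Hom-exactness conditions defining `n`-kernels and `n`-cokernels.
-/

open CategoryTheory CategoryTheory.Limits Opposite

universe v u

namespace RelHigher

variable {C : Type u} [Category.{v} C] [Preadditive C]

/-- Sequences `M⁰ → M¹ → ⋯ → Mⁿ⁺¹` of `n+1` composable arrows in `C`. -/
abbrev Seq (C : Type u) [Category.{v} C] (n : ℕ) := ComposableArrows C (n + 1)

/-- Exactness of `0 → Hom(A, M⁰) → ⋯ → Hom(A, Mⁿ⁺¹)` at all spots except the last,
i.e. the `n`-kernel condition on `(f⁰, …, fⁿ⁻¹)` with respect to `fⁿ`. -/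
def CovExact (n : ℕ) (S : Seq C n) (A : C) : Prop :=
  (∀ g : A ⟶ S.obj' 0, g ≫ S.map' 0 1 = 0 → g = 0) ∧
  ∀ (i : ℕ) (hi : i + 2 ≤ n + 1) (g : A ⟶ S.obj' (i + 1)),
    g ≫ S.map' (i + 1) (i + 2) = 0 → ∃ h : A ⟶ S.obj' i, h ≫ S.map' i (i + 1) = g

/-- Exactness of `0 → Hom(Mⁿ⁺¹, B) → ⋯ → Hom(M⁰, B)` at all spots except the last,
i.e. the `n`-cokernel condition on `(f¹, …, fⁿ)` with respect to `f⁰`. -/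
def ContraExact (n : ℕ) (S : Seq C n) (B : C) : Prop :=
  (∀ g : S.obj' (n + 1) ⟶ B, S.map' n (n + 1) ≫ g = 0 → g = 0) ∧
  ∀ (i : ℕ) (hi : i + 2 ≤ n + 1) (g : S.obj' (i + 1) ⟶ B),
    S.map' i (i + 1) ≫ g = 0 → ∃ h : S.obj' (i + 2) ⟶ B, S.map' (i + 1) (i + 2) ≫ h = g

/-- Surjectivity of `Hom(A, Mⁿ) → Hom(A, Mⁿ⁺¹)`; together with `CovExact` it says that
`Hom(A, −)` applied to the sequence is exact, including at the last spot. -/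
def CovSurj (n : ℕ) (S : Seq C n) (A : C) : Prop :=
  ∀ g : A ⟶ S.obj' (n + 1), ∃ h : A ⟶ S.obj' n, h ≫ S.map' n (n + 1) = g

/-- Surjectivity of `Hom(M¹, B) → Hom(M⁰, B)`. -/
def ContraSurj (n : ℕ) (S : Seq C n) (B : C) : Prop :=
  ∀ g : S.obj' 0 ⟶ B, ∃ h : S.obj' 1 ⟶ B, S.map' 0 1 ≫ h = g

/-- `n`-exactness of a sequence `0 → M⁰ → ⋯ → Mⁿ⁺¹ → 0` (Jasso). -/
structure IsNExact (n : ℕ) (S : Seq C n) : Prop where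
  comp_zero : ∀ (i : ℕ) (hi : i + 2 ≤ n + 1), S.map' i (i + 1) ≫ S.map' (i + 1) (i + 2) = 0
  cov : ∀ A : C, CovExact n S A
  contra : ∀ B : C, ContraExact n S B

/-- A sequence is split (contractible) if its identity chain map is null-homotopic. -/
def Contractible (n : ℕ) (S : Seq C n) : Prop :=
  ∃ s : ∀ (i : ℕ) (_ : i + 1 ≤ n + 1), (S.obj' (i + 1) ⟶ S.obj' i),
    (S.map' 0 1 ≫ s 0 (by omega) = 𝟙 (S.obj' 0)) ∧
    (s n (by omega) ≫ S.map' n (n + 1) = 𝟙 (S.obj' (n + 1))) ∧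
    ∀ (i : ℕ) (hi : i + 2 ≤ n + 1),
      s i (by omega) ≫ S.map' i (i + 1) + S.map' (i + 1) (i + 2) ≫ s (i + 1) (by omega) =
        𝟙 (S.obj' (i + 1))

/-- An additive subfunctor `F ⊆ Extⁿ(−,−)`, encoded as the collection of the `n`-exact
sequences lying in `F`: it contains all contractible (i.e. Yoneda-trivial) sequences and is
closed under `n`-pullbacks (chain maps which are isomorphisms on the first object),
`n`-pushouts (chain maps which are isomorphisms on the last object) and direct sums. -/
structure Subfunctor (n : ℕ) (C : Type u) [Category.{v} C] [Preadditive C] where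
  mem : Seq C n → Prop
  nExact : ∀ S, mem S → IsNExact n S
  contractible_mem : ∀ S, IsNExact n S → Contractible n S → mem S
  pullback : ∀ (S T : Seq C n), mem S → IsNExact n T →
    ∀ φ : T ⟶ S, IsIso (ComposableArrows.app' φ 0) → mem T
  pushout : ∀ (S T : Seq C n), mem S → IsNExact n T →
    ∀ φ : S ⟶ T, IsIso (ComposableArrows.app' φ (n + 1)) → mem T
  sum : ∀ (S T U : Seq C n), mem S → mem T → IsNExact n U →
    ∀ (i : S ⟶ U) (j : T ⟶ U) (p : U ⟶ S) (q : U ⟶ T),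
      i ≫ p = 𝟙 S → j ≫ q = 𝟙 T → i ≫ q = 0 → j ≫ p = 0 →
      p ≫ i + q ≫ j = 𝟙 U → mem U

/-- `P` is projective relative to a collection `memF` of `n`-exact sequences:
`Hom(P, −)` makes every sequence of the collection exact. -/
def FProjectiveP (n : ℕ) (memF : Seq C n → Prop) (P : C) : Prop :=
  ∀ S, memF S → CovExact n S P ∧ CovSurj n S P

/-- `I` is injective relative to a collection `memF` of `n`-exact sequences. -/
def FInjectiveP (n : ℕ) (memF : Seq C n → Prop) (I : C) : Prop :=
  ∀ S, memF S → ContraExact n S I ∧ ContraSurj n S I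

/-- `P` is `F`-projective. -/
def FProjective (n : ℕ) (F : Subfunctor n C) (P : C) : Prop :=
  FProjectiveP n F.mem P

/-- `I` is `F`-injective. -/
def FInjective (n : ℕ) (F : Subfunctor n C) (I : C) : Prop :=
  FInjectiveP n F.mem I

/-- A collection of `n`-exact sequences has enough projectives. -/
def EnoughProjP (n : ℕ) (memF : Seq C n → Prop) : Prop :=
  ∀ M : C, ∃ S : Seq C n, memF S ∧ S.obj' (n + 1) = M ∧ FProjectiveP n memF (S.obj' n)

/-- A collection of `n`-exact sequences has enough injectives. -/
def EnoughInjP (n : ℕ) (memF : Seq C n → Prop) : Prop :=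
  ∀ M : C, ∃ S : Seq C n, memF S ∧ S.obj' 0 = M ∧ FInjectiveP n memF (S.obj' 1)

def EnoughProj (n : ℕ) (F : Subfunctor n C) : Prop := EnoughProjP n F.mem

def EnoughInj (n : ℕ) (F : Subfunctor n C) : Prop := EnoughInjP n F.mem

/-- Existence of `n`-pullbacks of `F`-exact sequences along arbitrary morphisms. -/
def HasNPullbacks (n : ℕ) (F : Subfunctor n C) : Prop :=
  ∀ S, F.mem S → ∀ (X : C) (g : X ⟶ S.obj' (n + 1)),
    ∃ (T : Seq C n) (_ : F.mem T) (φ : T ⟶ S) (e : X ≅ T.obj' (n + 1)),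
      IsIso (ComposableArrows.app' φ 0) ∧ e.hom ≫ ComposableArrows.app' φ (n + 1) = g

/-- Existence of `n`-pushouts of `F`-exact sequences along arbitrary morphisms. -/
def HasNPushouts (n : ℕ) (F : Subfunctor n C) : Prop :=
  ∀ S, F.mem S → ∀ (Y : C) (g : S.obj' 0 ⟶ Y),
    ∃ (T : Seq C n) (_ : F.mem T) (φ : S ⟶ T) (e : T.obj' 0 ≅ Y),
      IsIso (ComposableArrows.app' φ (n + 1)) ∧ ComposableArrows.app' φ 0 ≫ e.hom = g

/-- The subfunctor `F_𝒩` determined by a class `N` of objects: those `n`-exact sequences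
that remain exact under `Hom(X, −)` for every `X ∈ N`. -/
def FNmem (n : ℕ) (N : Set C) (S : Seq C n) : Prop :=
  IsNExact n S ∧ ∀ X ∈ N, CovSurj n S X

/-- The subfunctor `F^𝒩`: sequences remaining exact under `Hom(−, X)` for every `X ∈ N`. -/
def coFNmem (n : ℕ) (N : Set C) (S : Seq C n) : Prop :=
  IsNExact n S ∧ ∀ X ∈ N, ContraSurj n S X

/-- An indecomposable object: nonzero, and its only idempotent endomorphisms are `0` and `𝟙`. -/
def Indec (X : C) : Prop :=
  ¬ IsZero X ∧ ∀ e : X ⟶ X, e ≫ e = e → e = 0 ∨ e = 𝟙 X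

/-- `f` lies in the Jacobson radical of the category. -/
def CatRadical {X Y : C} (f : X ⟶ Y) : Prop :=
  ∀ g : Y ⟶ X, IsIso (𝟙 X - f ≫ g)

/-- An `n`-almost split sequence: a non-split `n`-exact sequence with all maps in the
radical, whose last map is right almost split and whose first map is left almost split. -/
def NAlmostSplit (n : ℕ) (S : Seq C n) : Prop :=
  IsNExact n S ∧ ¬ Contractible n S ∧
  (∀ (i : ℕ) (hi : i + 1 ≤ n + 1), CatRadical (S.map' i (i + 1))) ∧
  (∀ (X : C) (g : X ⟶ S.obj' (n + 1)),
     (¬ ∃ s : S.obj' (n + 1) ⟶ X, s ≫ g = 𝟙 (S.obj' (n + 1))) →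
     ∃ h : X ⟶ S.obj' n, h ≫ S.map' n (n + 1) = g) ∧
  (∀ (Y : C) (g : S.obj' 0 ⟶ Y),
     (¬ ∃ r : Y ⟶ S.obj' 0, g ≫ r = 𝟙 (S.obj' 0)) →
     ∃ h : S.obj' 1 ⟶ Y, S.map' 0 1 ≫ h = g)

/-- A class of objects `N` is covariantly finite: every object has a left `N`-approximation. -/
def CovariantlyFinite (N : Set C) : Prop :=
  ∀ M : C, ∃ X ∈ N, ∃ f : M ⟶ X, ∀ Y ∈ N, ∀ g : M ⟶ Y, ∃ h : X ⟶ Y, f ≫ h = g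

/-- A class of objects `N` is contravariantly finite: every object has a right
`N`-approximation. -/
def ContravariantlyFinite (N : Set C) : Prop :=
  ∀ M : C, ∃ X ∈ N, ∃ f : X ⟶ M, ∀ Y ∈ N, ∀ g : Y ⟶ M, ∃ h : Y ⟶ X, h ≫ f = g

/-- `C` is of finite type: it has finitely many indecomposables up to isomorphism. -/
def FiniteType (C : Type u) [Category.{v} C] [Preadditive C] : Prop :=
  ∃ (ι : Type) (_ : Finite ι) (G : ι → C), ∀ X : C, Indec X → ∃ i, Nonempty (X ≅ G i)

/-- A class of objects is of finite type. -/
def FiniteTypeSet (N : Set C) : Prop :=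
  ∃ (ι : Type) (_ : Finite ι) (G : ι → C), ∀ X ∈ N, Indec X → ∃ i, Nonempty (X ≅ G i)

/-- `f` factors through an object of `T`. -/
def FactorsThru (T : Set C) {X Y : C} (f : X ⟶ Y) : Prop :=
  ∃ Z ∈ T, ∃ (u : X ⟶ Z) (v : Z ⟶ Y), u ≫ v = f

/-- The hom relation "the difference factors through an object of `T`", whose quotient
category is the (co)stable category of `C` relative to `T`. -/
def stRel (T : Set C) : HomRel C := fun {X Y} f g => FactorsThru T (f - g)

/-- A full additive subcategory, closed under isomorphisms, direct sums and summands. -/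
structure IsAddClosed (N : Set C) : Prop where
  iso : ∀ {X Y : C}, (X ≅ Y) → X ∈ N → Y ∈ N
  summand : ∀ {X Z : C} (i : X ⟶ Z) (p : Z ⟶ X), i ≫ p = 𝟙 X → Z ∈ N → X ∈ N
  sum : ∀ {X Y Z : C} (i : X ⟶ Z) (j : Y ⟶ Z) (p : Z ⟶ X) (q : Z ⟶ Y),
    i ≫ p = 𝟙 X → j ≫ q = 𝟙 Y → i ≫ q = 0 → j ≫ p = 0 → p ≫ i + q ≫ j = 𝟙 Z →
    X ∈ N → Y ∈ N → Z ∈ N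

end RelHigher

namespace RelHigher

open CategoryTheory CategoryTheory.Limits Opposite

variable {C : Type u} [Category.{v} C] [Preadditive C]

set_option maxHeartbeats 1000000 in
private lemma splitMono_contractible (n : ℕ) (S : Seq C n) (hS : IsNExact n S)
    (r : S.obj' 1 ⟶ S.obj' 0) (hr : S.map' 0 1 ≫ r = 𝟙 (S.obj' 0)) :
    Contractible n S := by
  have key : ∀ k, ∀ hk : k ≤ n,
      ∃ u : ∀ i, ∀ _ : i ≤ k, (S.obj' (i + 1) ⟶ S.obj' i),
      (S.map' 0 1 ≫ u 0 (Nat.zero_le k) = 𝟙 (S.obj' 0)) ∧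
      (S.map' k (k + 1) ≫ u k (Nat.le_refl k) ≫ S.map' k (k + 1) = S.map' k (k + 1)) ∧
      (∀ i, ∀ hik : i + 1 ≤ k, u i (Nat.le_of_succ_le hik) ≫ S.map' i (i + 1) +
        S.map' (i + 1) (i + 2) ≫ u (i + 1) hik = 𝟙 (S.obj' (i + 1))) := by
    intro k
    induction k with
    | zero =>
      intro hk
      refine ⟨fun i h => cast (by have e : i = 0 := (by omega); subst e; rfl) r, ?_, ?_, ?_⟩
      · exact hr
      · have h2 : S.map' 0 1 ≫ r ≫ S.map' 0 1 = S.map' 0 1 := by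
          rw [← Category.assoc, hr, Category.id_comp]
        exact h2
      · intro i hik
        exact absurd hik (by omega)
    | succ k ih =>
      intro hk1
      obtain ⟨u, hu0, huinv, humid⟩ := ih (Nat.le_of_succ_le hk1)
      have hzero : S.map' k (k + 1) ≫
          (𝟙 _ - u k (Nat.le_refl k) ≫ S.map' k (k + 1)) = 0 := by
        rw [Preadditive.comp_sub, Category.comp_id, huinv]
        exact sub_eq_zero_of_eq rfl
      obtain ⟨w, hw⟩ := (hS.contra (S.obj' (k + 1))).2 k (Nat.succ_le_succ hk1) _ hzero
      refine ⟨fun i h => if h' : i ≤ k then u i h' else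
        cast (by have e : i = k + 1 := (by omega); subst e; rfl) w, ?_, ?_, ?_⟩
      · beta_reduce
        rw [dif_pos (Nat.zero_le k)]
        exact hu0
      · beta_reduce
        rw [dif_neg (show ¬ k + 1 ≤ k by omega)]
        have h2 : S.map' (k + 1) (k + 2) ≫ w ≫ S.map' (k + 1) (k + 2) =
            S.map' (k + 1) (k + 2) := by
          rw [← Category.assoc, hw, Preadditive.sub_comp, Category.id_comp, Category.assoc,
            hS.comp_zero k (Nat.succ_le_succ hk1), Limits.comp_zero, sub_zero]
        exact h2
      · intro i hik
        beta_reduce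
        by_cases h' : i + 1 ≤ k
        · rw [dif_pos (Nat.le_of_succ_le h'), dif_pos h']
          exact humid i h'
        · obtain rfl : i = k := by omega
          rw [dif_pos (Nat.le_refl i), dif_neg (show ¬ i + 1 ≤ i by omega)]
          have h3 : u i (Nat.le_refl i) ≫ S.map' i (i + 1) +
              S.map' (i + 1) (i + 2) ≫ w = 𝟙 _ := by
            rw [hw]
            abel
          exact h3
  obtain ⟨u, hu0, huinv, humid⟩ := key n (Nat.le_refl n)
  have hlast : u n (Nat.le_refl n) ≫ S.map' n (n + 1) = 𝟙 (S.obj' (n + 1)) := by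
    have h0 : S.map' n (n + 1) ≫
        (𝟙 _ - u n (Nat.le_refl n) ≫ S.map' n (n + 1)) = 0 := by
      rw [Preadditive.comp_sub, Category.comp_id, huinv]
      exact sub_eq_zero_of_eq rfl
    have h1 := (hS.contra (S.obj' (n + 1))).1 _ h0
    rw [sub_eq_zero] at h1
    exact h1.symm
  exact ⟨fun i hi => u i (Nat.succ_le_succ_iff.mp hi), hu0, hlast,
    fun i hi => humid i (Nat.succ_le_succ_iff.mp hi)⟩

set_option maxHeartbeats 1000000 in
private lemma splitEpi_contractible (n : ℕ) (S : Seq C n) (hS : IsNExact n S)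
    (t : S.obj' (n + 1) ⟶ S.obj' n) (ht : t ≫ S.map' n (n + 1) = 𝟙 (S.obj' (n + 1))) :
    Contractible n S := by
  have key : ∀ d m, ∀ hm : m + d = n,
      ∃ v : ∀ i, ∀ _ : m ≤ i, ∀ _ : i ≤ n, (S.obj' (i + 1) ⟶ S.obj' i),
      (v n (Nat.le.intro hm) (Nat.le_refl n) ≫ S.map' n (n + 1) = 𝟙 (S.obj' (n + 1))) ∧
      (S.map' m (m + 1) ≫ v m (Nat.le_refl m) (Nat.le.intro hm) ≫ S.map' m (m + 1) =
        S.map' m (m + 1)) ∧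
      (∀ i, ∀ him : m ≤ i, ∀ hik : i + 1 ≤ n,
        v i him (Nat.le_of_succ_le hik) ≫ S.map' i (i + 1) +
        S.map' (i + 1) (i + 2) ≫ v (i + 1) (Nat.le_succ_of_le him) hik =
        𝟙 (S.obj' (i + 1))) := by
    intro d
    induction d with
    | zero =>
      intro m hm
      obtain rfl : m = n := by omega
      refine ⟨fun i h1 h2 => cast (by have e : i = m := (by omega); subst e; rfl) t, ?_, ?_, ?_⟩
      · exact ht
      · have h2 : S.map' m (m + 1) ≫ t ≫ S.map' m (m + 1) = S.map' m (m + 1) := by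
          rw [ht, Category.comp_id]
        exact h2
      · intro i h1 h2
        exact absurd h2 (by omega)
    | succ d ih =>
      intro m hm
      have hm1 : m + 1 ≤ n := by omega
      obtain ⟨v, hv1, hvinv, hvmid⟩ := ih (m + 1) (by omega)
      have hzero : (𝟙 _ -
          S.map' (m + 1) (m + 2) ≫ v (m + 1) (Nat.le_refl (m + 1)) hm1) ≫
          S.map' (m + 1) (m + 2) = 0 := by
        rw [Preadditive.sub_comp, Category.id_comp, Category.assoc, hvinv]
        exact sub_eq_zero_of_eq rfl
      obtain ⟨w, hw⟩ := (hS.cov (S.obj' (m + 1))).2 m (Nat.succ_le_succ hm1) _ hzero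
      refine ⟨fun i h1 h2 => if h' : m + 1 ≤ i then v i h' h2 else
        cast (by have e : i = m := (by omega); subst e; rfl) w, ?_, ?_, ?_⟩
      · beta_reduce
        rw [dif_pos hm1]
        exact hv1
      · beta_reduce
        rw [dif_neg (show ¬ m + 1 ≤ m by omega)]
        have h2 : S.map' m (m + 1) ≫ w ≫ S.map' m (m + 1) = S.map' m (m + 1) := by
          rw [hw, Preadditive.comp_sub, Category.comp_id, ← Category.assoc,
            hS.comp_zero m (Nat.succ_le_succ hm1), Limits.zero_comp, sub_zero]
        exact h2
      · intro i h1 h2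
        beta_reduce
        by_cases h' : m + 1 ≤ i
        · rw [dif_pos h', dif_pos (Nat.le_succ_of_le h')]
          exact hvmid i h' h2
        · obtain rfl : i = m := by omega
          rw [dif_neg (show ¬ i + 1 ≤ i by omega), dif_pos (Nat.le_refl (i + 1))]
          have h3 : w ≫ S.map' i (i + 1) +
              S.map' (i + 1) (i + 2) ≫ v (i + 1) (Nat.le_refl (i + 1)) h2 =
              𝟙 _ := by
            rw [hw]
            abel
          exact h3
  obtain ⟨v, hv1, hvinv, hvmid⟩ := key n 0 (Nat.zero_add n)
  have hfirst : S.map' 0 1 ≫ v 0 (Nat.le_refl 0) (Nat.zero_le n) = 𝟙 (S.obj' 0) := by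
    have h0 : (𝟙 _ - S.map' 0 1 ≫ v 0 (Nat.le_refl 0) (Nat.zero_le n)) ≫
        S.map' 0 1 = 0 := by
      rw [Preadditive.sub_comp, Category.id_comp, Category.assoc, hvinv]
      exact sub_eq_zero_of_eq rfl
    have h1 := (hS.cov (S.obj' 0)).1 _ h0
    rw [sub_eq_zero] at h1
    exact h1.symm
  exact ⟨fun i hi => v i (Nat.zero_le i) (Nat.succ_le_succ_iff.mp hi), hfirst, hv1,
    fun i hi => hvmid i (Nat.zero_le i) (Nat.succ_le_succ_iff.mp hi)⟩

/-- An `n`-exact sequence `0 → M⁰ → M¹ → ⋯ → Mⁿ⁺¹ → 0` in an additive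
category is split (its identity is null-homotopic) iff `f⁰` is a split monomorphism, iff
`fⁿ` is a split epimorphism. -/
theorem stmt_0 (n : ℕ) (hn : 1 ≤ n) (S : Seq C n) (hS : IsNExact n S) :
    (Contractible n S ↔ ∃ r : S.obj' 1 ⟶ S.obj' 0, S.map' 0 1 ≫ r = 𝟙 (S.obj' 0)) ∧
    (Contractible n S ↔ ∃ s : S.obj' (n + 1) ⟶ S.obj' n,
      s ≫ S.map' n (n + 1) = 𝟙 (S.obj' (n + 1))) := by
  constructor
  · constructor
    · rintro ⟨s, h0, -, -⟩
      exact ⟨s 0 (by omega), h0⟩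
    · rintro ⟨r, hr⟩
      exact splitMono_contractible n S hS r hr
  · constructor
    · rintro ⟨s, -, hlast, -⟩
      exact ⟨s n (by omega), hlast⟩
    · rintro ⟨t, ht⟩
      exact splitEpi_contractible n S hS t ht

end RelHigher
end

section
/- Let F be an additive subfunctor of Extⁿ_M(−,−) on an n-cluster tilting subcategory M. An object P of M is F-projective (i.e. every F-exact sequence stays exact under M(P,−)) if and only if F(P, M) = 0 for all objects M of M. -/
/-!
Common framework for relative higher homological algebra (Hafezi–Asadollahi–Zhang).
We work with an additive category `C` which plays the role of the `n`-cluster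
tilting subcategory `𝓜` of `mod Λ`.  `Seq C n` is the type of complexes
`M⁰ → M¹ → ⋯ → Mⁿ⁺¹` and `IsNExact` expresses `n`-exactness via the
Hom-exactness conditions defining `n`-kernels and `n`-cokernels.
-/

open CategoryTheory CategoryTheory.Limits Opposite

universe v u

namespace RelHigher

open CategoryTheory CategoryTheory.Limits Opposite

variable {C : Type u} [Category.{v} C] [Preadditive C]

lemma contractible_of_section (n : ℕ) (S : Seq C n) (hS : IsNExact n S)
    (s : S.obj' (n + 1) ⟶ S.obj' n) (hs : s ≫ S.map' n (n + 1) = 𝟙 _) :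
    Contractible n S := by
  have key : ∀ j : ℕ,
      ∃ t : ∀ (i : ℕ) (_ : i + 1 ≤ n + 1), (S.obj' (i + 1) (by omega) ⟶ S.obj' i (by omega)),
        ∀ (m : ℕ) (hm : m + 1 ≤ n + 1), n - j ≤ m →
          t m hm ≫ S.map' m (m + 1) (by omega) (by omega) =
            𝟙 (S.obj' (m + 1) (by omega)) -
              (if h : m + 2 ≤ n + 1 then
                S.map' (m + 1) (m + 2) (by omega) (by omega) ≫ t (m + 1) (by omega) else 0) := by
    intro j
    induction j with
    | zero =>
      refine ⟨fun i hi => if h : i = n then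
          eqToHom (by subst h; rfl) ≫ s ≫ eqToHom (by subst h; rfl) else 0, ?_⟩
      intro m hm hnm
      obtain rfl : m = n := by omega
      simp only [dif_pos rfl, dif_neg (show ¬ m + 2 ≤ m + 1 by omega)]
      simp only [eqToHom_refl, Category.id_comp, Category.comp_id, Category.assoc, sub_zero]
      exact hs
    | succ j ih =>
      obtain ⟨t, ht⟩ := ih
      by_cases hjn : n - (j + 1) = n - j
      · exact ⟨t, fun m hm hnm => ht m hm (by omega)⟩
      · obtain ⟨k, hk⟩ : ∃ k, n - (j + 1) = k := ⟨_, rfl⟩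
        have hk1 : k + 1 = n - j := by omega
        have hk2 : k + 2 ≤ n + 1 := by omega
        have pk1 : k + 1 ≤ n + 1 := by omega
        have pk12 : k + 1 ≤ k + 2 := by omega
        have pk11 : k + 1 + 1 ≤ n + 1 := by omega
        have hg : (𝟙 (S.obj' (k + 1) pk1) -
            S.map' (k + 1) (k + 2) pk12 hk2 ≫ t (k + 1) pk11) ≫
            S.map' (k + 1) (k + 2) pk12 hk2 = 0 := by
          have h1 := ht (k + 1) (by omega) (by omega)
          rw [Preadditive.sub_comp, Category.id_comp, Category.assoc, h1]
          by_cases h3 : k + 1 + 2 ≤ n + 1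
          · rw [dif_pos h3]
            have hz := hS.comp_zero (k + 1) (by omega)
            rw [Preadditive.comp_sub, Category.comp_id, ← Category.assoc, hz, zero_comp,
              sub_zero, sub_self]
          · rw [dif_neg h3, sub_zero, Category.comp_id, sub_self]
        obtain ⟨h, hh⟩ := (hS.cov (S.obj' (k + 1) (by omega))).2 k hk2 _ hg
        refine ⟨fun i hi => if hik : i = k then
            eqToHom (by subst hik; rfl) ≫ h ≫ eqToHom (by subst hik; rfl) else t i hi, ?_⟩
        intro m hm hnm
        by_cases hmk : m = k
        · subst hmk
          simp only [dif_pos rfl, dif_pos (show m + 2 ≤ n + 1 from hk2),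
            dif_neg (show ¬ m + 1 = m by omega)]
          simp only [eqToHom_refl, Category.id_comp, Category.comp_id, Category.assoc]
          exact hh
        · simp only [dif_neg hmk, dif_neg (show ¬ m + 1 = k by omega)]
          exact ht m hm (by omega)
  obtain ⟨t, ht⟩ := key n
  have htop : t n (by omega) ≫ S.map' n (n + 1) = 𝟙 (S.obj' (n + 1)) := by
    have := ht n (by omega) (by omega)
    rwa [dif_neg (show ¬ n + 2 ≤ n + 1 by omega), sub_zero] at this
  have hrel : ∀ (i : ℕ) (hi : i + 2 ≤ n + 1),
      t i (by omega) ≫ S.map' i (i + 1) + S.map' (i + 1) (i + 2) ≫ t (i + 1) (by omega) =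
        𝟙 (S.obj' (i + 1)) := by
    intro i hi
    have := ht i (by omega) (by omega)
    rw [dif_pos hi] at this
    rw [this]
    abel
  refine ⟨t, ?_, htop, hrel⟩
  have p0 : (0:ℕ) ≤ n + 1 := by omega
  have p01 : (0:ℕ) ≤ 1 := by omega
  have p1 : (1:ℕ) ≤ n + 1 := by omega
  have hz : (𝟙 (S.obj' 0 p0) - S.map' 0 1 p01 p1 ≫ t 0 p1) ≫ S.map' 0 1 p01 p1 = 0 := by
    have h0 := ht 0 (by omega) (by omega)
    rw [Preadditive.sub_comp, Category.id_comp, Category.assoc, h0]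
    by_cases h2 : 0 + 2 ≤ n + 1
    · rw [dif_pos h2]
      have hz0 := hS.comp_zero 0 h2
      rw [Preadditive.comp_sub, Category.comp_id, ← Category.assoc, hz0, zero_comp,
        sub_zero, sub_self]
    · rw [dif_neg h2, sub_zero, Category.comp_id, sub_self]
  have := (hS.cov (S.obj' 0)).1 _ hz
  rw [sub_eq_zero] at this
  exact this.symm


/-- `P` is `F`-projective iff `F(P, M) = 0` for every `M`, i.e. every
`F`-exact sequence ending at (an object isomorphic to) `P` is split. -/
theorem stmt_1 (n : ℕ) (F : Subfunctor n C) (hpb : HasNPullbacks n F) (P : C) :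
    FProjective n F P ↔
      ∀ (M : C) (S : Seq C n), F.mem S → (S.obj' 0 ≅ M) → (S.obj' (n + 1) ≅ P) →
        Contractible n S := by
  constructor
  · intro hP M S hmem e1 e2
    obtain ⟨hcov, hsurj⟩ := hP S hmem
    obtain ⟨h, hh⟩ := hsurj e2.inv
    exact contractible_of_section n S (F.nExact S hmem) (e2.hom ≫ h)
      (by rw [Category.assoc, hh]; exact e2.hom_inv_id)
  · intro H S hmem
    refine ⟨(F.nExact S hmem).cov P, ?_⟩
    intro g
    obtain ⟨T, hT, φ, e, hiso, he⟩ := hpb S hmem P g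
    obtain ⟨t, ht0, htn, htr⟩ := H (T.obj' 0) T hT (Iso.refl _) e.symm
    refine ⟨e.hom ≫ t n (by omega) ≫ ComposableArrows.app' φ n, ?_⟩
    have hcomp : t n (by omega) ≫ T.map' n (n + 1) ≫ ComposableArrows.app' φ (n + 1) =
        ComposableArrows.app' φ (n + 1) := by
      rw [← Category.assoc, htn, Category.id_comp]
    rw [Category.assoc, Category.assoc, ← ComposableArrows.naturality' φ n (n + 1), hcomp, he]

end RelHigher
end

section
/- Let F be an additive subfunctor of Extⁿ_M(−,−) with enough projectives. An n-exact sequence ξ: 0 → M' → M¹ → ⋯ → Mⁿ → M → 0 in M is F-exact if and only if the sequence 0 → M(P,M') → M(P,M¹) → ⋯ → M(P,M) → 0 is exact for every F-projective module P. -/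
/-!
Common framework for relative higher homological algebra (Hafezi–Asadollahi–Zhang).
We work with an additive category `C` which plays the role of the `n`-cluster
tilting subcategory `𝓜` of `mod Λ`.  `Seq C n` is the type of complexes
`M⁰ → M¹ → ⋯ → Mⁿ⁺¹` and `IsNExact` expresses `n`-exactness via the
Hom-exactness conditions defining `n`-kernels and `n`-cokernels.
-/

open CategoryTheory CategoryTheory.Limits Opposite

universe v u

namespace RelHigher

open CategoryTheory CategoryTheory.Limits Opposite

variable {C : Type u} [Category.{v} C] [Preadditive C]

/-- Key construction: given `n`-exact `T` and `S` with the same last object, such that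
`Hom(T.obj' n, -)` is surjective on the last map of `S`, there is a chain map `T ⟶ S`
which is the canonical identification on the last object. -/
lemma exists_hom_of_surj {n : ℕ} {T S : Seq C n}
    (hT : IsNExact n T) (hS : IsNExact n S)
    (e : T.obj' (n+1) = S.obj' (n+1))
    (hsurj : CovSurj n S (T.obj' n)) :
    ∃ φ : T ⟶ S, ComposableArrows.app' φ (n+1) = eqToHom e := by
  have claim : ∀ k : ℕ, k ≤ n+1 →
      ∃ φ : ∀ (i : ℕ) (hi : i ≤ n+1), (T.obj' i hi ⟶ S.obj' i hi),
      φ (n+1) (le_refl _) = eqToHom e ∧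
      ∀ (i : ℕ) (h1 : n+1-k ≤ i) (h2 : i+1 ≤ n+1),
        T.map' i (i+1) (by omega) h2 ≫ φ (i+1) h2 =
          φ i (by omega) ≫ S.map' i (i+1) (by omega) h2 := by
    intro k
    induction k with
    | zero =>
      intro _
      refine ⟨fun i hi => if hij : i = n+1 then eqToHom (by subst hij; exact e) else 0,
        ?_, ?_⟩
      · simp only [dif_pos rfl]; rfl
      · intro i h1 h2; omega
    | succ k ih =>
      intro hk
      obtain ⟨φ, hφtop, hφsq⟩ := ih (by omega)
      have hnew : ∃ f : T.obj' (n-k) (by omega) ⟶ S.obj' (n-k) (by omega),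
          T.map' (n-k) (n-k+1) (by omega) (by omega) ≫ φ (n-k+1) (by omega) =
            f ≫ S.map' (n-k) (n-k+1) (by omega) (by omega) := by
        match k with
        | 0 =>
          obtain ⟨f, hf⟩ := hsurj (T.map' n (n+1) ≫ φ (n+1) (le_refl _))
          exact ⟨f, hf.symm⟩
        | k'+1 =>
          have hb : (n - (k'+1)) + 1 + 1 ≤ n + 1 := by omega
          have hz : (T.map' (n-(k'+1)) (n-(k'+1)+1) (by omega) (by omega) ≫
                φ (n-(k'+1)+1) (by omega)) ≫
                S.map' (n-(k'+1)+1) (n-(k'+1)+1+1) (by omega) (by omega) = 0 := by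
            rw [Category.assoc]
            have hsq := hφsq (n-(k'+1)+1) (by omega) (by omega)
            rw [show φ (n-(k'+1)+1) (by omega) ≫
                  S.map' (n-(k'+1)+1) (n-(k'+1)+1+1) (by omega) (by omega) =
                T.map' (n-(k'+1)+1) (n-(k'+1)+1+1) (by omega) (by omega) ≫
                  φ (n-(k'+1)+1+1) (by omega) from hsq.symm]
            rw [← Category.assoc, hT.comp_zero (n-(k'+1)) hb, zero_comp]
          obtain ⟨f, hf⟩ := (hS.cov (T.obj' (n-(k'+1)) (by omega))).2 (n-(k'+1)) hb
            (T.map' (n-(k'+1)) (n-(k'+1)+1) (by omega) (by omega) ≫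
              φ (n-(k'+1)+1) (by omega)) hz
          exact ⟨f, hf.symm⟩
      obtain ⟨f, hf⟩ := hnew
      refine ⟨fun i hi => if hij : i = n - k then
          eqToHom (by subst hij; rfl) ≫ f ≫ eqToHom (by subst hij; rfl)
        else φ i hi, ?_, ?_⟩
      · have hne : ¬ (n + 1 = n - k) := by omega
        simp only [dif_neg hne]; exact hφtop
      · intro i h1 h2
        by_cases hij : i = n - k
        · subst hij
          have hne : ¬ (n - k + 1 = n - k) := by omega
          simp only [dif_pos rfl, dif_neg hne, eqToHom_refl, Category.id_comp,
            Category.comp_id]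
          exact hf
        · have hne : ¬ (i + 1 = n - k) := by omega
          simp only [dif_neg hij, dif_neg hne]
          exact hφsq i (by omega) h2
  obtain ⟨φ, hφtop, hφsq⟩ := claim (n+1) (le_refl _)
  refine ⟨ComposableArrows.homMk (fun i => φ i.1 (by omega)) ?_, ?_⟩
  · intro i hi
    exact hφsq i (by omega) (by omega)
  · exact hφtop

/-- If `F` has enough projectives, an `n`-exact sequence is `F`-exact
iff `Hom(P, −)` makes it exact for every `F`-projective `P`. -/
theorem stmt_2 (n : ℕ) (F : Subfunctor n C) (hpo : HasNPushouts n F)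
    (hep : EnoughProj n F) (S : Seq C n) (hS : IsNExact n S) :
    F.mem S ↔ ∀ P : C, FProjective n F P → CovExact n S P ∧ CovSurj n S P := by
  constructor
  · intro hmem P hP
    exact hP S hmem
  · intro hproj
    obtain ⟨T, hTmem, hTtop, hTproj⟩ := hep (S.obj' (n+1))
    have hT := F.nExact T hTmem
    have hsurj : CovSurj n S (T.obj' n) := (hproj (T.obj' n) hTproj).2 
    obtain ⟨ψ, hψ⟩ := exists_hom_of_surj hT hS hTtop hsurj
    have : IsIso (ComposableArrows.app' ψ (n+1)) := by rw [hψ]; infer_instance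
    exact F.pushout T S hTmem hS ψ this

end RelHigher
end

section
/- Let F be a subfunctor of Extⁿ_M(−,−) with enough projectives and X an indecomposable non-projective module in M. Then X is F-projective if and only if the n-almost split sequence 0 → τₙX → M¹ → ⋯ → Mⁿ → X → 0 in M is not F-exact. -/
/-!
Common framework for relative higher homological algebra (Hafezi–Asadollahi–Zhang).
We work with an additive category `C` which plays the role of the `n`-cluster
tilting subcategory `𝓜` of `mod Λ`.  `Seq C n` is the type of complexes
`M⁰ → M¹ → ⋯ → Mⁿ⁺¹` and `IsNExact` expresses `n`-exactness via the
Hom-exactness conditions defining `n`-kernels and `n`-cokernels.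
-/

open CategoryTheory CategoryTheory.Limits Opposite

universe v u

namespace RelHigher

open CategoryTheory CategoryTheory.Limits Opposite

variable {C : Type u} [Category.{v} C] [Preadditive C]

/-- Comparison lemma: extend a commuting square at the top to a chain map. -/
lemma exists_chain_map (n : ℕ) (T S : Seq C n)
    (hT0 : ∀ (i : ℕ) (hi : i + 2 ≤ n + 1), T.map' i (i + 1) ≫ T.map' (i + 1) (i + 2) = 0)
    (hScov : ∀ A : C, CovExact n S A)
    (gtop : T.obj' (n + 1) ⟶ S.obj' (n + 1)) (gn : T.obj' n ⟶ S.obj' n)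
    (hg : gn ≫ S.map' n (n + 1) = T.map' n (n + 1) ≫ gtop) :
    ∃ φ : T ⟶ S, ComposableArrows.app' φ (n + 1) = gtop := by
  have key : ∀ k : ℕ, k ≤ n →
      ∃ app : ∀ (i : ℕ) (hi : i ≤ n + 1), (T.obj' i hi ⟶ S.obj' i hi),
      app (n + 1) le_rfl = gtop ∧
      ∀ (i : ℕ) (h1 : n - k ≤ i) (h2 : i + 1 ≤ n + 1),
        app i (Nat.le_of_succ_le h2) ≫ S.map' i (i + 1) (Nat.le_succ i) h2 =
          T.map' i (i + 1) (Nat.le_succ i) h2 ≫ app (i + 1) h2 := by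
    intro k hk
    induction k with
    | zero =>
      refine ⟨fun i hi =>
        if h : i = n + 1 then eqToHom (by subst h; rfl) ≫ gtop ≫ eqToHom (by subst h; rfl)
        else if h' : i = n then eqToHom (by subst h'; rfl) ≫ gn ≫ eqToHom (by subst h'; rfl)
        else 0, ?_, ?_⟩
      · simp
      · intro i h1 h2
        obtain rfl : i = n := by omega
        beta_reduce
        rw [dif_neg (by omega), dif_pos rfl, dif_pos rfl]
        simp [hg]
    | succ k ih =>
      obtain ⟨app, htop, hsq⟩ := ih (by omega)
      set j := n - (k + 1) with hj
      have hj1 : j + 1 = n - k := by omega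
      have hj2 : j + 2 ≤ n + 1 := by omega
      have h0 : (T.map' j (j + 1) ≫ app (j + 1) (by omega)) ≫ S.map' (j + 1) (j + 2) = 0 := by
        rw [Category.assoc, hsq (j + 1) (by omega) (by omega), ← Category.assoc,
          ← T.map'_comp j (j + 1) (j + 2), T.map'_comp j (j + 1) (j + 2), hT0 j hj2,
          zero_comp]
      obtain ⟨ℓ, hℓ⟩ := (hScov (T.obj' j)).2 j hj2 (T.map' j (j + 1) ≫ app (j + 1) (by omega)) h0
      refine ⟨fun i hi =>
        if h : i = j then eqToHom (by subst h; rfl) ≫ ℓ ≫ eqToHom (by subst h; rfl)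
        else app i hi, ?_, ?_⟩
      · beta_reduce
        rw [dif_neg (by omega)]; exact htop
      · intro i h1 h2
        beta_reduce
        by_cases hij : i = j
        · subst hij
          rw [dif_pos rfl, dif_neg (by omega)]
          simpa using hℓ
        · rw [dif_neg hij, dif_neg (by omega)]
          exact hsq i (by omega) h2
  obtain ⟨app, htop, hsq⟩ := key n le_rfl
  refine ⟨ComposableArrows.homMk (fun i => app i.1 (by omega))
    (fun i hi => (hsq i (by omega) (by omega)).symm), ?_⟩
  exact htop

/-- Summand closure for relative projectivity. -/
lemma fproj_of_retract (n : ℕ) (memF : Seq C n → Prop) {X P : C}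
    (i : X ⟶ P) (p : P ⟶ X) (hip : i ≫ p = 𝟙 X)
    (hP : ∀ S, memF S → CovExact n S P ∧ CovSurj n S P) :
    ∀ S, memF S → CovExact n S X ∧ CovSurj n S X := by
  intro S hSm
  obtain ⟨⟨hc0, hce⟩, hcs⟩ := hP S hSm
  refine ⟨⟨?_, ?_⟩, ?_⟩
  · intro g hg
    have h0 := hc0 (p ≫ g) (by rw [Category.assoc, hg, comp_zero])
    calc g = i ≫ p ≫ g := by rw [← Category.assoc, hip, Category.id_comp]
    _ = 0 := by rw [h0, comp_zero]
  · intro k hk g hg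
    obtain ⟨h, hh⟩ := hce k hk (p ≫ g) (by rw [Category.assoc, hg, comp_zero])
    exact ⟨i ≫ h, by rw [Category.assoc, hh, ← Category.assoc, hip, Category.id_comp]⟩
  · intro g
    obtain ⟨h, hh⟩ := hcs (p ≫ g)
    exact ⟨i ≫ h, by rw [Category.assoc, hh, ← Category.assoc, hip, Category.id_comp]⟩

/-- Let `F` have enough projectives and let `X` be indecomposable and
non-projective, with `n`-almost split sequence `S` ending at `X`.  Then `X` is
`F`-projective iff `S` is not `F`-exact. -/
theorem stmt_7 (n : ℕ) (F : Subfunctor n C) (hep : EnoughProj n F)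
    (Proj : Set C) (hProjAdd : IsAddClosed Proj)
    (hProjF : ∀ P ∈ Proj, ∀ S : Seq C n, IsNExact n S → CovSurj n S P)
    (S : Seq C n) (hS : NAlmostSplit n S)
    (hind : Indec (S.obj' (n + 1))) (hnp : S.obj' (n + 1) ∉ Proj) :
    FProjective n F (S.obj' (n + 1)) ↔ ¬ F.mem S := by
  constructor
  · intro hFP hmem
    obtain ⟨h, hh⟩ := (hFP S hmem).2 (𝟙 (S.obj' (n + 1)))
    have hrad := hS.2.2.1 n (by omega)
    have hiso : IsIso (𝟙 (S.obj' n (Nat.le_succ n)) -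
        S.map' n (n + 1) (Nat.le_succ n) le_rfl ≫ h) := hrad h
    set f : S.obj' n (Nat.le_succ n) ⟶ S.obj' (n + 1) le_rfl :=
      S.map' n (n + 1) (Nat.le_succ n) le_rfl with hf
    set e : S.obj' n (Nat.le_succ n) ⟶ S.obj' n (Nat.le_succ n) :=
      𝟙 (S.obj' n (Nat.le_succ n)) - f ≫ h with he
    have hfhfh : f ≫ h ≫ f ≫ h = f ≫ h := by
      rw [← Category.assoc h f, hh, Category.id_comp]
    have hidem : e ≫ e = e := by
      simp only [he, Preadditive.sub_comp, Preadditive.comp_sub, Category.id_comp,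
        Category.comp_id, Category.assoc, hfhfh]
      abel
    have heq : e = 𝟙 (S.obj' n (Nat.le_succ n)) := by
      have : e ≫ e = e ≫ 𝟙 (S.obj' n (Nat.le_succ n)) := by rw [hidem, Category.comp_id]
      exact (cancel_epi e).1 this
    have hf0 : f ≫ h = 0 := by
      have := heq
      rw [he] at this
      simpa [sub_eq_self] using this
    have hhz : h = 0 := by
      calc h = (h ≫ f) ≫ h := by rw [hh, Category.id_comp]
      _ = h ≫ f ≫ h := by rw [Category.assoc]
      _ = h ≫ 0 := by rw [hf0]
      _ = 0 := comp_zero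
    have : 𝟙 (S.obj' (n + 1)) = 0 := by rw [← hh, hhz, zero_comp]
    exact hind.1 ((IsZero.iff_id_eq_zero _).2 this)
  · intro hnmem
    by_contra hX
    obtain ⟨T, hTmem, hTX, hTP⟩ := hep (S.obj' (n + 1))
    have hTex : IsNExact n T := F.nExact T hTmem
    set e : T.obj' (n + 1) ⟶ S.obj' (n + 1) := eqToHom hTX with hedef
    set d : T.obj' n ⟶ S.obj' (n + 1) := T.map' n (n + 1) ≫ e with hd
    by_cases hsplit : ∃ s : S.obj' (n + 1) ⟶ T.obj' n, s ≫ d = 𝟙 (S.obj' (n + 1))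
    · obtain ⟨s, hs⟩ := hsplit
      exact hX (fproj_of_retract n F.mem s d hs hTP)
    · obtain ⟨h, hh⟩ := hS.2.2.2.1 (T.obj' n) d hsplit
      obtain ⟨φ, hφ⟩ := exists_chain_map n T S hTex.comp_zero (fun A => hS.1.cov A) e h
        (by rw [hh, hd])
      have hisoφ : IsIso (ComposableArrows.app' φ (n + 1)) := by
        rw [hφ, hedef]; infer_instance
      exact hnmem (F.pushout T S hTmem hS.1 φ hisoφ)

end RelHigher
end

section
/- Let N be an additive subcategory of an n-cluster tilting subcategory M of mod-Λ. Then the subcategory of F_N-projective objects equals N ∪ P(Λ), and the subcategory of F^N-injective objects equals N ∪ I(Λ). -/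
/-!
Common framework for relative higher homological algebra (Hafezi–Asadollahi–Zhang).
We work with an additive category `C` which plays the role of the `n`-cluster
tilting subcategory `𝓜` of `mod Λ`.  `Seq C n` is the type of complexes
`M⁰ → M¹ → ⋯ → Mⁿ⁺¹` and `IsNExact` expresses `n`-exactness via the
Hom-exactness conditions defining `n`-kernels and `n`-cokernels.
-/

open CategoryTheory CategoryTheory.Limits Opposite

universe v u

namespace RelHigher

open CategoryTheory CategoryTheory.Limits Opposite

variable {C : Type u} [Category.{v} C] [Preadditive C]

/-- For an additive subcategory `N` of `𝓜`:
`𝓟(F_N) = N ∪ 𝓟(Λ)` and `𝓘(F^N) = N ∪ 𝓘(Λ)` (stated on indecomposables, where the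
additive closure of the union is just the union). -/
theorem stmt_8 (n : ℕ) (N Proj Inj : Set C) (hN : IsAddClosed N)
    (hProjF : ∀ P ∈ Proj, ∀ S : Seq C n, IsNExact n S → CovSurj n S P)
    (hInjF : ∀ I ∈ Inj, ∀ S : Seq C n, IsNExact n S → ContraSurj n S I)
    (halmostR : ∀ X : C, Indec X → X ∉ Proj →
      ∃ S : Seq C n, NAlmostSplit n S ∧ S.obj' (n + 1) = X)
    (halmostL : ∀ Y : C, Indec Y → Y ∉ Inj →
      ∃ S : Seq C n, NAlmostSplit n S ∧ S.obj' 0 = Y) :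
    (∀ X : C, Indec X → (FProjectiveP n (FNmem n N) X ↔ X ∈ N ∨ X ∈ Proj)) ∧
    (∀ Y : C, Indec Y → (FInjectiveP n (coFNmem n N) Y ↔ Y ∈ N ∨ Y ∈ Inj)) := by
  have hle : n ≤ n + 1 := by omega
  have hle2 : n + 1 ≤ n + 1 := le_rfl
  constructor
  · intro X hX
    constructor
    · intro hFP
      by_cases hXN : X ∈ N
      · exact Or.inl hXN
      by_cases hXP : X ∈ Proj
      · exact Or.inr hXP
      exfalso
      obtain ⟨S, hS, hSe⟩ := halmostR X hX hXP
      subst hSe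
      have hmem : FNmem n N S := by
        refine ⟨hS.1, fun Y hY g => ?_⟩
        refine hS.2.2.2.1 Y g ?_
        rintro ⟨s, hs⟩
        exact hXN (hN.summand s g hs hY)
      obtain ⟨-, hsurj⟩ := hFP S hmem
      obtain ⟨h, hh⟩ := hsurj (𝟙 _)
      have hrad := hS.2.2.1 n hle2 h
      set f : S.obj' n hle ⟶ S.obj' (n + 1) hle2 := S.map' n (n + 1) hle hle2 with hfdef
      have hh' : h ≫ f = 𝟙 _ := hh
      haveI : IsIso (𝟙 (S.obj' n hle) - f ≫ h) := hrad
      have hkey : (𝟙 (S.obj' n hle) - f ≫ h) ≫ (f ≫ h) = 0 := by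
        rw [Preadditive.sub_comp, Category.id_comp, Category.assoc,
          ← Category.assoc h, hh', Category.id_comp, sub_self]
      have hfh : f ≫ h = 0 := by
        calc f ≫ h = inv (𝟙 (S.obj' n hle) - f ≫ h) ≫
              ((𝟙 (S.obj' n hle) - f ≫ h) ≫ (f ≫ h)) := by
              rw [← Category.assoc, IsIso.inv_hom_id, Category.id_comp]
          _ = 0 := by rw [hkey, Limits.comp_zero]
      have hid : 𝟙 (S.obj' (n + 1) hle2) = 0 := by
        calc 𝟙 (S.obj' (n + 1) hle2) = (h ≫ f) ≫ (h ≫ f) := by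
              rw [hh', Category.id_comp]
          _ = h ≫ (f ≫ h) ≫ f := by simp only [Category.assoc]
          _ = 0 := by rw [hfh, Limits.zero_comp, Limits.comp_zero]
      exact hX.1 ((Limits.IsZero.iff_id_eq_zero _).mpr hid)
    · rintro (hXN | hXP) S hSmem
      · exact ⟨hSmem.1.cov X, hSmem.2 X hXN⟩
      · exact ⟨hSmem.1.cov X, hProjF X hXP S hSmem.1⟩
  · intro Y hY
    constructor
    · intro hFI
      by_cases hYN : Y ∈ N
      · exact Or.inl hYN
      by_cases hYI : Y ∈ Inj
      · exact Or.inr hYI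
      exfalso
      obtain ⟨S, hS, hSe⟩ := halmostL Y hY hYI
      subst hSe
      have hmem : coFNmem n N S := by
        refine ⟨hS.1, fun X hXN g => ?_⟩
        refine hS.2.2.2.2 X g ?_
        rintro ⟨r, hr⟩
        exact hYN (hN.summand g r hr hXN)
      obtain ⟨-, hsurj⟩ := hFI S hmem
      obtain ⟨h, hh⟩ := hsurj (𝟙 _)
      have h0le : (0 : ℕ) ≤ n + 1 := by omega
      have h1le : (1 : ℕ) ≤ n + 1 := by omega
      have hrad := hS.2.2.1 0 h1le h
      set f : S.obj' 0 h0le ⟶ S.obj' 1 h1le := S.map' 0 1 (by omega) h1le with hfdef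
      have hh' : f ≫ h = 𝟙 _ := hh
      haveI : IsIso (𝟙 (S.obj' 0 h0le) - f ≫ h) := hrad
      have hid : 𝟙 (S.obj' 0 h0le) = 0 := by
        have hz : 𝟙 (S.obj' 0 h0le) - f ≫ h = 0 := by rw [hh', sub_self]
        rw [hz] at this
        calc 𝟙 (S.obj' 0 h0le)
            = (0 : S.obj' 0 h0le ⟶ S.obj' 0 h0le) ≫
                inv (0 : S.obj' 0 h0le ⟶ S.obj' 0 h0le) := (IsIso.hom_inv_id _).symm
          _ = 0 := Limits.zero_comp
      exact hY.1 ((Limits.IsZero.iff_id_eq_zero _).mpr hid)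
    · rintro (hYN | hYI) S hSmem
      · exact ⟨hSmem.1.contra Y, hSmem.2 Y hYN⟩
      · exact ⟨hSmem.1.contra Y, hInjF Y hYI S hSmem.1⟩

end RelHigher
end
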